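/- Suppose r > 1 rooms, each with a finite set of switch configurations, and the initial configurations are unknown to the prisoners. Then for every deterministic prisoners' strategy there exist initial room configurations and a valid schedule (one sending every prisoner to every room infinitely often) under which the prisoners either declare before every prisoner has visited every room, or never declare at all. Hence no winning strategy exists. -/

import Mathlib

/-- A prisoner's observation history: the list of (configuration seen on entry,
configuration left on exit) for each of his visits so far. -/
abbrev Hist (C : Type) := List (C × C)

/-- A deterministic strategy: for each prisoner, a function from his history
and the configuration of the room he enters to the configuration he leaves the
room in, together with whether he declares. -/
abbrev Strategy (n : ℕ) (C : Type) := Fin n → Hist C → C → C × Bool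

/-- A schedule: who visits which room at each step. -/
abbrev Schedule (n r : ℕ) := ℕ → Fin n × Fin r

/-- Global state of an execution. -/
structure PState (n r : ℕ) (C : Type) where
  rooms : Fin r → C
  hist : Fin n → Hist C
  declared : Bool

/-- One visit of prisoner `v.1` to room `v.2`. -/
def pstep {n r : ℕ} {C : Type} (σ : Strategy n C) (v : Fin n × Fin r)
    (s : PState n r C) : PState n r C :=
  let cur := s.rooms v.2
  let a := σ v.1 (s.hist v.1) cur
  { rooms := Function.update s.rooms v.2 a.1
    hist := Function.update s.hist v.1 (s.hist v.1 ++ [(cur, a.1)])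
    declared := s.declared || a.2 }

/-- The state after `t` visits, starting from initial room configurations `init`. -/
def prun {n r : ℕ} {C : Type} (σ : Strategy n C) (sch : Schedule n r)
    (init : Fin r → C) : ℕ → PState n r C
  | 0 => ⟨init, fun _ => [], false⟩
  | t + 1 => pstep σ (sch t) (prun σ sch init t)

/-- A schedule is valid if every prisoner visits every room infinitely often. -/
def ValidSchedule {n r : ℕ} (sch : Schedule n r) : Prop :=
  ∀ (p : Fin n) (rm : Fin r), {t | sch t = (p, rm)}.Infinite

/-- Prisoner `p` has visited room `rm` within the first `t` visits. -/
def VisitedBy {n r : ℕ} (sch : Schedule n r) (t : ℕ) (p : Fin n) (rm : Fin r) : Prop :=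
  ∃ t' < t, sch t' = (p, rm)

/-- A strategy is winning for initial configurations `init` if under every
valid schedule some prisoner eventually declares, and every declaration occurs
only after each prisoner has visited every room at least once. -/
def Winning {n r : ℕ} {C : Type} (σ : Strategy n C) (init : Fin r → C) : Prop :=
  ∀ sch : Schedule n r, ValidSchedule sch →
    (∃ t, (prun σ sch init t).declared = true) ∧
    (∀ t, (prun σ sch init t).declared = true → ∀ p rm, VisitedBy sch t p rm)

/-!
Let the prisoners take turns in a single room. By pigeonhole, some configuration `w` is left in
that room at the end of infinitely many rounds. Start every other room in `w` and, at those
moments, move the play on to the next room: each prisoner then observes exactly what he would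
have observed in the one-room run, although every prisoner now visits every room infinitely
often. So the prisoners never declare, unless they declare in the one-room run at some time `T`;
in that case only the moves after `T` are made, and the declaration comes before anybody has
seen a second room.
-/

open Fin.NatCast

namespace PState

variable {n r : ℕ} {C : Type}

def relocate (s : PState n r C) (src dst : Fin r) (w : C) : PState n r C :=
  { s with rooms := Function.update (fun _ => w) dst (s.rooms src) }

theorem pstep_relocate (σ : Strategy n C) (s : PState n r C) (p : Fin n) (src dst : Fin r)
    (w : C) :
    pstep σ (p, dst) (s.relocate src dst w) = (pstep σ (p, src) s).relocate src dst w := by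
  simp [pstep, relocate]

theorem relocate_eq_of_rooms_eq {s : PState n r C} {src : Fin r} {w : C} (h : s.rooms src = w)
    (dst dst' : Fin r) : s.relocate src dst w = s.relocate src dst' w := by
  simp [relocate, h]

end PState

theorem prun_relocate {n r : ℕ} {C : Type} (σ : Strategy n C) (q : ℕ → Fin n) (src : Fin r)
    (ρ : ℕ → Fin r) (init : Fin r → C) (w : C)
    (hρ : ∀ t, ρ (t + 1) ≠ ρ t → (prun σ (fun t => (q t, src)) init (t + 1)).rooms src = w)
    (t : ℕ) :
    prun σ (fun t => (q t, ρ t)) (Function.update (fun _ => w) (ρ 0) (init src)) t =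
      (prun σ (fun t => (q t, src)) init t).relocate src (ρ t) w := by
  induction t with
  | zero => rfl
  | succ t ih =>
    rw [prun, ih, PState.pstep_relocate]
    by_cases h : ρ (t + 1) = ρ t
    · rw [h]; rfl
    · exact PState.relocate_eq_of_rooms_eq (hρ t h) _ _

theorem Nat.pred_div_and_succ_eq_of_count_succ_div_ne {P : ℕ → Prop} [DecidablePred P]
    {n t : ℕ}
    (h : Nat.count P ((t + 1) / n) ≠ Nat.count P (t / n)) :
    P (t / n) ∧ t + 1 = (t / n + 1) * n := by
  rw [Nat.succ_div] at h
  split_ifs at h with hdvd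
  · refine ⟨by by_contra hP; simp [Nat.count_succ, hP] at h, ?_⟩
    rw [← Nat.succ_div_of_dvd hdvd, Nat.div_mul_cancel hdvd]
  · exact absurd rfl h

theorem validSchedule_count_div {n r : ℕ} [NeZero n] [NeZero r] {P : ℕ → Prop}
    [DecidablePred P] (hP : {k | P k}.Infinite) :
    ValidSchedule (fun t : ℕ => ((t : Fin n), (Nat.count P (t / n) : Fin r)) : Schedule n r) := by
  intro p j
  apply Set.infinite_of_forall_exists_gt
  intro N
  set k := Nat.nth P (j + r * (N + 1))
  have hk : Nat.count P k = j + r * (N + 1) := Nat.count_nth_of_infinite hP _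
  have hNk : N < k := calc
    N < r * (N + 1) := by nlinarith [NeZero.pos r]
    _ ≤ Nat.count P k := by omega
    _ ≤ k := Nat.count_le _
  have hdiv : (k * n + p) / n = k := by
    rw [Nat.add_comm, Nat.add_mul_div_right _ _ (NeZero.pos n), Nat.div_eq_of_lt p.isLt,
      Nat.zero_add]
  refine ⟨k * n + p, ?_, hNk.trans_le ?_⟩
  · simp only [Set.mem_ofPred_eq, Prod.mk.injEq, hdiv, hk, Fin.ext_iff, Fin.val_natCast]
    constructor
    · rw [Nat.mul_add_mod_self_right, Nat.mod_eq_of_lt p.isLt]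
    · rw [Nat.add_mul_mod_self_left, Nat.mod_eq_of_lt j.isLt]
  · exact (Nat.le_mul_of_pos_right k (NeZero.pos n)).trans (Nat.le_add_right _ _)

theorem exists_validSchedule_declared_eq_singleRoom {n r : ℕ} [NeZero n] [NeZero r] {C : Type}
    [Finite C] (σ : Strategy n C) (c₀ : C) (N : ℕ) :
    ∃ (init : Fin r → C) (sch : Schedule n r), ValidSchedule sch ∧ (∀ t < N, (sch t).2 = 0) ∧
      ∀ t, (prun σ sch init t).declared =
        (prun σ (fun t : ℕ => ((t : Fin n), (0 : Fin r))) (fun _ => c₀) t).declared := by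
  classical
  set run := prun σ (fun t : ℕ => ((t : Fin n), (0 : Fin r))) (fun _ => c₀)
  obtain ⟨w, hw⟩ := Finite.exists_infinite_fiber fun k => (run ((k + 1) * n)).rooms 0
  set P : ℕ → Prop := fun k => N ≤ k ∧ (run ((k + 1) * n)).rooms 0 = w
  have hP : {k | P k}.Infinite :=
    ((Set.infinite_coe_iff.1 hw).sdiff (Set.finite_Iio N)).mono fun k hk =>
      ⟨not_lt.1 hk.2, hk.1⟩
  set ρ : ℕ → Fin r := fun t => (Nat.count P (t / n) : Fin r)
  have hρ : ∀ t, ρ (t + 1) ≠ ρ t → (run (t + 1)).rooms 0 = w := by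
    intro t h
    have hcount : Nat.count P ((t + 1) / n) ≠ Nat.count P (t / n) := fun heq =>
      h (by simp only [ρ, heq])
    obtain ⟨hPt, ht⟩ := Nat.pred_div_and_succ_eq_of_count_succ_div_ne hcount
    rw [ht]
    exact hPt.2
  have hρ₀ : ∀ t < N, ρ t = 0 := by
    intro t ht
    have hcount : Nat.count P (t / n) = 0 := Nat.count_of_forall_not fun m hm hPm => by
      have := Nat.div_le_self t n
      have := hPm.1
      omega
    simp only [ρ, hcount, Nat.cast_zero]
  have hrun := prun_relocate σ (fun t : ℕ => (t : Fin n)) 0 ρ (fun _ => c₀) w hρ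
  rw [show ρ 0 = 0 by simp [ρ]] at hrun
  refine ⟨Function.update (fun _ => w) 0 c₀, fun t => ((t : Fin n), ρ t),
    validSchedule_count_div hP, hρ₀, fun t => ?_⟩
  rw [hrun t]
  rfl

/-- Theorem: no winning strategy with unknown starting
configurations. With `r > 1` rooms, each having a finite configuration set,
for every deterministic strategy there are initial configurations and a valid
schedule under which the prisoners either declare before everyone has visited
every room, or never declare at all. -/
theorem no_winning_strategy_unknown_start (n r : ℕ) (C : Type) [Finite C]
    [Nonempty C] (hn : 0 < n) (hr : 1 < r) (σ : Strategy n C) :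
    ∃ (init : Fin r → C) (sch : Schedule n r), ValidSchedule sch ∧
      ((∃ t, (prun σ sch init t).declared = true ∧
          ∃ (p : Fin n) (rm : Fin r), ¬ VisitedBy sch t p rm) ∨
        (∀ t, (prun σ sch init t).declared = false)) := by
  have : NeZero n := ⟨hn.ne'⟩
  have : NeZero r := ⟨by omega⟩
  obtain ⟨c₀⟩ := ‹Nonempty C›
  by_cases hdecl : ∃ T, (prun σ (fun t : ℕ => ((t : Fin n), (0 : Fin r))) (fun _ => c₀) T).declared
  · obtain ⟨T, hT⟩ := hdecl
    obtain ⟨init, sch, hvalid, hroom, hsame⟩ :=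
      exists_validSchedule_declared_eq_singleRoom (r := r) σ c₀ T
    refine ⟨init, sch, hvalid, Or.inl ⟨T, (hsame T).trans hT, 0, ⟨1, hr⟩, ?_⟩⟩
    rintro ⟨t, ht, hsch⟩
    have := congrArg (fun v => (v.2 : ℕ)) hsch
    simp [hroom t ht] at this
  · push Not at hdecl
    obtain ⟨init, sch, hvalid, -, hsame⟩ :=
      exists_validSchedule_declared_eq_singleRoom (r := r) σ c₀ 0
    exact ⟨init, sch, hvalid, Or.inr fun t => by simpa [hsame t] using hdecl t⟩
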